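/- For the nodal curve algebra A = k + I with I = (t²−1)k[t], the operator D = (t²−1)·d²/dt² lies in D_A but the map μ*(D) : A ⊗ A → A, a ⊗ b ↦ D(ab), is not in the image of μ_* : D_A ⊗_A D_A → Hom_k(A ⊗ A, A), (D₁ ⊗ D₂) ↦ (a ⊗ b ↦ D₁(a)D₂(b)). -/
import Mathlib


open Polynomial

/-- The operator of multiplication by the polynomial `p`. -/
noncomputable def mulOp {k : Type*} [CommRing k] (p : k[X]) : Module.End k k[X] :=
  LinearMap.mulLeft k p

/-- The Weyl algebra `D_B`, realized as the subalgebra of `k`-linear endomorphisms of `k[t]`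
generated by multiplication by `t` and the derivative `∂`. -/
noncomputable def Weyl (k : Type*) [CommRing k] : Subalgebra k (Module.End k k[X]) :=
  Algebra.adjoin k {mulOp X, (derivative : k[X] →ₗ[k] k[X])}

/-- The left ideal `I·D_B` where `I = f·k[t]`: the `k`-span of operators `g·D`
with `g ∈ I` and `D ∈ D_B`. -/
noncomputable def IDB {k : Type*} [CommRing k] (f : k[X]) : Submodule k (Module.End k k[X]) :=
  Submodule.span k {E | ∃ g D, g ∈ Ideal.span {f} ∧ D ∈ Weyl k ∧ E = mulOp g * D}

/-- Membership in `D_A = k + I·D_B`. -/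
def memDA {k : Type*} [CommRing k] (f : k[X]) (E : Module.End k k[X]) : Prop :=
  ∃ c : k, E - algebraMap k (Module.End k k[X]) c ∈ IDB f

/-- Membership in `A = k + I` where `I = f·k[t]`. -/
def memA {k : Type*} [CommRing k] (f : k[X]) (p : k[X]) : Prop :=
  ∃ c : k, p - C c ∈ Ideal.span {f}

/-- `f` is a product of `r ≥ 2` pairwise coprime irreducible polynomials. -/
def NiceF {k : Type*} [CommRing k] (f : k[X]) : Prop :=
  ∃ (r : ℕ) (fs : Fin r → k[X]), 2 ≤ r ∧ (∀ i, Irreducible (fs i)) ∧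
    (∀ i j, i ≠ j → IsCoprime (fs i) (fs j)) ∧ f = ∏ i, fs i


lemma IDB_apply_mem {k : Type*} [CommRing k] (f : k[X]) {E : Module.End k k[X]}
    (hE : E ∈ IDB f) (p : k[X]) : E p ∈ Ideal.span {f} := by
  induction hE using Submodule.span_induction with
  | mem E hE =>
    obtain ⟨g, D, hg, hD, rfl⟩ := hE
    simp only [Module.End.mul_apply, mulOp, LinearMap.mulLeft_apply]
    exact Ideal.mul_mem_right _ _ hg
  | zero => simp
  | add E F _ _ hE hF => simpa using Ideal.add_mem _ hE hF
  | smul c E _ hE =>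
    simpa [Polynomial.smul_eq_C_mul] using Ideal.mul_mem_left _ (C c) hE

lemma memDA_apply_mem {k : Type*} [CommRing k] (f : k[X]) {E : Module.End k k[X]}
    (hE : memDA f E) : E f ∈ Ideal.span {f} := by
  obtain ⟨c, hc⟩ := hE
  have h1 := IDB_apply_mem f hc f
  have h2 : E f = (E - algebraMap k (Module.End k k[X]) c) f + C c * f := by
    simp [Module.algebraMap_end_apply, Polynomial.smul_eq_C_mul]
  rw [h2]
  exact Ideal.add_mem _ h1 (Ideal.mul_mem_left _ _ (Ideal.mem_span_singleton_self f))

/-- for the nodal curve, `D = (t²−1)·d²/dt²` lies in `D_A` but `μ*(D)` is not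
in the image of `μ_*`: there is no finite family `D₁ᵢ, D₂ᵢ ∈ D_A` with
`D(ab) = Σᵢ D₁ᵢ(a)·D₂ᵢ(b)` for all `a, b ∈ A`. -/
theorem stmt15 {k : Type*} [Field k] [CharZero k] :
    memDA (X ^ 2 - 1 : k[X])
      (mulOp (X ^ 2 - 1) * ((derivative : k[X] →ₗ[k] k[X]) ^ 2)) ∧
    ¬ ∃ (n : ℕ) (D₁ D₂ : Fin n → Module.End k k[X]),
        (∀ i, memDA (X ^ 2 - 1 : k[X]) (D₁ i)) ∧
        (∀ i, memDA (X ^ 2 - 1 : k[X]) (D₂ i)) ∧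
        ∀ a b : k[X], memA (X ^ 2 - 1) a → memA (X ^ 2 - 1) b →
          ((mulOp (X ^ 2 - 1) * derivative ^ 2 : Module.End k k[X])) (a * b)
            = ∑ i, (D₁ i) a * (D₂ i) b := by
  constructor
  · refine ⟨0, ?_⟩
    rw [map_zero, sub_zero]
    have hd : (derivative : k[X] →ₗ[k] k[X]) ∈ Weyl k :=
      Algebra.subset_adjoin (by simp)
    exact Submodule.subset_span ⟨X ^ 2 - 1, derivative ^ 2,
      Ideal.mem_span_singleton_self _, pow_mem hd 2, rfl⟩
  · rintro ⟨n, D₁, D₂, h1, h2, heq⟩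
    set f : k[X] := X ^ 2 - 1 with hf
    have hfA : memA f f := ⟨0, by simpa using Ideal.mem_span_singleton_self f⟩
    have key := heq f f hfA hfA
    have hder : ((derivative : k[X] →ₗ[k] k[X]) ^ 2) (f * f) = 12 * X ^ 2 - 4 := by
      have hx : (f * f) = X ^ 4 - 2 * X ^ 2 + 1 := by rw [hf]; ring
      rw [pow_two, Module.End.mul_apply, hx]
      simp [derivative_pow]
      have h3 : (C 3 : k[X]) = 3 := map_ofNat C _
      have h4 : (C 4 : k[X]) = 4 := map_ofNat C _
      have h2' : (C 2 : k[X]) = 2 := map_ofNat C _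
      rw [h3, h4, h2']; ring
    have hlhs : ((mulOp f * derivative ^ 2 : Module.End k k[X])) (f * f)
        = f * (12 * X ^ 2 - 4) := by
      rw [Module.End.mul_apply, hder]; rfl
    have hdvd : f * f ∣ ∑ i, (D₁ i) f * (D₂ i) f := by
      refine Finset.dvd_sum fun i _ => ?_
      obtain ⟨p, hp⟩ := Ideal.mem_span_singleton.mp (memDA_apply_mem f (h1 i))
      obtain ⟨q, hq⟩ := Ideal.mem_span_singleton.mp (memDA_apply_mem f (h2 i))
      rw [hp, hq]
      exact ⟨p * q, by ring⟩
    rw [← key, hlhs] at hdvd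
    have hfne : f ≠ 0 := by
      intro h
      have := congrArg (eval 0) h
      simp [hf] at this
    have hdvd2 : f ∣ 12 * X ^ 2 - 4 := (mul_dvd_mul_iff_left hfne).mp hdvd
    obtain ⟨g, hg⟩ := hdvd2
    have := congrArg (eval 1) hg
    simp [hf] at this
    norm_num at this
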